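/- arXiv:2603.05643 — 3 statements merged into one kernel-verified Lean document; each statement's English description precedes it below -/
import Mathlib

section
/- Let N ≥ 1 and let H be an N×N Hermitian complex matrix with spectral decomposition H = Σ_{k=1}^{K} λ_k P_k, where λ_1, …, λ_K are the distinct (real) eigenvalues of H and P_1, …, P_K are the orthogonal projections onto the corresponding eigenspaces (so P_k P_l = 0 for k ≠ l and Σ_k P_k = I). Then for all indices i, j, the time-averaged transition probability converges: (1/T) ∫_0^T |(exp(−itH))_{ij}|² dt tends, as T → ∞, to Σ_{k=1}^{K} |(P_k)_{ij}|². -/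
/-!
The spectral decomposition makes `c ↦ ∑ k, c k • P k` an algebra map from `Fin K → ℂ`, so
`exp (-itH) = ∑ k, e^{-itλ_k} P_k` and the `(i, j)` entry is the trigonometric polynomial
`∑ k, e^{-itλ_k} (P_k)_{ij}`. Its squared modulus is a combination of the oscillations
`e^{i(λ_l - λ_k)t}`, whose time averages tend to `1` when `k = l` and to `0` otherwise,
because the `λ_k` are distinct; only the diagonal terms `|(P_k)_{ij}|²` survive.
-/

open Filter Topology Complex ComplexConjugate

namespace CompleteOrthogonalIdempotents

variable {ι R A : Type*} [Fintype ι] [CommSemiring R] [Semiring A] [Algebra R A] {e : ι → A}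

def sumSMulAlgHom (he : CompleteOrthogonalIdempotents e) : (ι → R) →ₐ[R] A where
  toFun c := ∑ k, c k • e k
  map_one' := by simp [he.complete]
  map_mul' c d := by
    classical
    simp only [Finset.sum_mul_sum, smul_mul_smul_comm, he.mul_eq, smul_ite, smul_zero,
      Finset.sum_ite_eq, Finset.mem_univ, if_true, Pi.mul_apply]
  map_zero' := by simp
  map_add' c d := by simp [add_smul, Finset.sum_add_distrib]
  commutes' r := by simp [Algebra.algebraMap_eq_smul_one, ← Finset.smul_sum, he.complete]

theorem exp_sum_smul {A : Type*} [NormedRing A] [NormedAlgebra ℂ A] [Algebra ℚ A] {e : ι → A}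
    (he : CompleteOrthogonalIdempotents e) (c : ι → ℂ) :
    NormedSpace.exp (∑ k, c k • e k) = ∑ k, cexp (c k) • e k := by
  -- `exp` on `ι → ℂ` acts coordinatewise and commutes with continuous algebra maps.
  have hcont : Continuous (he.sumSMulAlgHom (R := ℂ)) :=
    continuous_finsetSum _ fun k _ => (continuous_apply k).smul continuous_const
  simpa [sumSMulAlgHom, Pi.exp_def, ← Complex.exp_eq_exp_ℂ] using
    (NormedSpace.map_exp _ hcont c).symm

end CompleteOrthogonalIdempotents

theorem Matrix.exp_sum_smul_of_completeOrthogonalIdempotents {ι n : Type*} [Fintype ι] [Fintype n]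
    [DecidableEq n] {P : ι → Matrix n n ℂ} (hP : CompleteOrthogonalIdempotents P) (c : ι → ℂ) :
    NormedSpace.exp (∑ k, c k • P k) = ∑ k, cexp (c k) • P k :=
  letI := Matrix.linftyOpNormedRing (n := n) (α := ℂ)
  letI := Matrix.linftyOpNormedAlgebra (n := n) (R := ℂ) (α := ℂ)
  hP.exp_sum_smul c

theorem tendsto_average_integral_cexp_mul {μ : ℂ} (hμ : μ.re = 0) :
    Tendsto (fun T : ℝ => (T : ℂ)⁻¹ * ∫ t in (0 : ℝ)..T, cexp (μ * t)) atTop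
      (𝓝 (if μ = 0 then 1 else 0)) := by
  rcases eq_or_ne μ 0 with rfl | hμ0
  · refine tendsto_const_nhds.congr' ?_
    filter_upwards [eventually_ne_atTop 0] with T hT
    simp [hT]
  · rw [if_neg hμ0]
    refine squeeze_zero_norm' ?_ (by simpa using tendsto_inv_atTop_zero.mul_const (2 / ‖μ‖))
    filter_upwards [eventually_gt_atTop 0] with T hT
    have hbound : ‖cexp (μ * T) - cexp (μ * (0 : ℝ))‖ ≤ 2 := by
      refine (norm_sub_le _ _).trans ?_
      simp only [norm_exp, mul_re, hμ, ofReal_re, zero_mul, ofReal_im, mul_zero, sub_self,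
        Real.exp_zero, ofReal_zero, exp_zero, norm_one]
      norm_num
    rw [integral_exp_mul_complex hμ0, norm_mul, norm_div, norm_inv, Complex.norm_real,
      Real.norm_of_nonneg hT.le]
    gcongr

variable {ι : Type*} [Fintype ι]

theorem sq_norm_sum_cexp_mul (a : ι → ℂ) (lam : ι → ℝ) (t : ℝ) :
    ((‖∑ k, cexp (-(I * t) * lam k) * a k‖ ^ 2 : ℝ) : ℂ) =
      ∑ k, ∑ l, a k * conj (a l) * cexp (I * (lam l - lam k) * t) := by
  rw [Complex.ofReal_pow, ← Complex.mul_conj', map_sum, Finset.sum_mul_sum]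
  refine Finset.sum_congr rfl fun k _ => Finset.sum_congr rfl fun l _ => ?_
  have hconj : conj (cexp (-(I * t) * lam l)) = cexp (I * t * lam l) := by
    simp [← Complex.exp_conj]
  rw [map_mul, hconj, show I * (lam l - lam k) * t = -(I * t) * lam k + I * t * lam l by ring,
    Complex.exp_add]
  ring

theorem ofReal_average_sq_norm_sum_cexp_mul (a : ι → ℂ) (lam : ι → ℝ) (T : ℝ) :
    (((1 / T) * ∫ t in (0 : ℝ)..T, ‖∑ k, cexp (-(I * t) * lam k) * a k‖ ^ 2 : ℝ) : ℂ) =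
      ∑ k, ∑ l, a k * conj (a l) *
        ((T : ℂ)⁻¹ * ∫ t in (0 : ℝ)..T, cexp (I * (lam l - lam k) * t)) := by
  have hcont (k l : ι) :
      Continuous fun t : ℝ => a k * conj (a l) * cexp (I * (lam l - lam k) * t) := by
    fun_prop
  rw [Complex.ofReal_mul, ← intervalIntegral.integral_ofReal]
  simp_rw [sq_norm_sum_cexp_mul]
  rw [intervalIntegral.integral_finsetSum fun k _ =>
    (continuous_finsetSum _ fun l _ => hcont k l).intervalIntegrable 0 T, Finset.mul_sum]
  refine Finset.sum_congr rfl fun k _ => ?_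
  rw [intervalIntegral.integral_finsetSum fun l _ => (hcont k l).intervalIntegrable 0 T,
    Finset.mul_sum]
  refine Finset.sum_congr rfl fun l _ => ?_
  rw [intervalIntegral.integral_const_mul, Complex.ofReal_div, Complex.ofReal_one]
  ring

theorem tendsto_average_sq_norm_sum_cexp_mul (a : ι → ℂ) {lam : ι → ℝ}
    (hlam : Function.Injective lam) :
    Tendsto (fun T : ℝ => (1 / T) * ∫ t in (0 : ℝ)..T, ‖∑ k, cexp (-(I * t) * lam k) * a k‖ ^ 2)
      atTop (𝓝 (∑ k, ‖a k‖ ^ 2)) := by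
  have hdiag : ∑ k, ∑ l, a k * conj (a l) * (if I * (lam l - lam k) = 0 then 1 else 0) =
      ((∑ k, ‖a k‖ ^ 2 : ℝ) : ℂ) := by
    push_cast
    refine Finset.sum_congr rfl fun k _ => ?_
    rw [Finset.sum_eq_single k, if_pos (by simp), mul_one, Complex.mul_conj']
    · intro l _ hlk
      rw [if_neg (by simpa [sub_eq_zero] using fun h => hlk (hlam h)), mul_zero]
    · simp
  rw [← tendsto_ofReal_iff, ← hdiag]
  refine .congr (fun T => (ofReal_average_sq_norm_sum_cexp_mul a lam T).symm)
    (tendsto_finsetSum _ fun k _ => tendsto_finsetSum _ fun l _ =>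
      (tendsto_average_integral_cexp_mul ?_).const_mul _)
  simp

theorem long_time_average_transition_probability_general
    (N : ℕ) (H : Matrix (Fin N) (Fin N) ℂ)
    (K : ℕ) (lam : Fin K → ℝ) (hdistinct : Function.Injective lam)
    (P : Fin K → Matrix (Fin N) (Fin N) ℂ)
    (hIdem : ∀ k, P k * P k = P k)
    (hOrth : ∀ k l, k ≠ l → P k * P l = 0)
    (hSum : ∑ k, P k = 1)
    (hSpec : H = ∑ k, (lam k : ℂ) • P k)
    (i j : Fin N) :
    Filter.Tendsto
      (fun T : ℝ => (1 / T) * ∫ t in (0:ℝ)..T,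
        ‖(NormedSpace.exp ((-(Complex.I * (t : ℂ))) • H)) i j‖ ^ 2)
      Filter.atTop
      (nhds (∑ k, ‖P k i j‖ ^ 2)) := by
  have hP : CompleteOrthogonalIdempotents P := ⟨⟨hIdem, fun k l => hOrth k l⟩, hSum⟩
  have hentry (t : ℝ) : NormedSpace.exp ((-(I * t)) • H) i j =
      ∑ k, cexp (-(I * t) * lam k) * P k i j := by
    rw [hSpec, Finset.smul_sum]
    simp_rw [smul_smul]
    rw [Matrix.exp_sum_smul_of_completeOrthogonalIdempotents hP]
    simp [Matrix.sum_apply]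
  simp_rw [hentry]
  exact tendsto_average_sq_norm_sum_cexp_mul _ hdistinct

/-- **Long-time averaged transition probability.**
Let `H` be an `N × N` Hermitian complex matrix with spectral decomposition
`H = ∑ k, lam k • P k`, where the `lam k` are the distinct real eigenvalues and the
`P k` are the orthogonal projections onto the corresponding eigenspaces
(`P k * P l = 0` for `k ≠ l`, `∑ k, P k = 1`).  Then for all indices `i j`, the
time-averaged transition probability `(1/T) ∫_0^T |(exp(-itH))_{ij}|² dt` tends, as
`T → ∞`, to `∑ k, |(P k)_{ij}|²`. -/
theorem long_time_average_transition_probability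
    (N : ℕ) (hN : 1 ≤ N) (H : Matrix (Fin N) (Fin N) ℂ) (hH : H.IsHermitian)
    (K : ℕ) (lam : Fin K → ℝ) (hdistinct : Function.Injective lam)
    (P : Fin K → Matrix (Fin N) (Fin N) ℂ)
    (hHerm : ∀ k, (P k).IsHermitian)
    (hIdem : ∀ k, P k * P k = P k)
    (hOrth : ∀ k l, k ≠ l → P k * P l = 0)
    (hSum : ∑ k, P k = 1)
    (hSpec : H = ∑ k, (lam k : ℂ) • P k)
    (i j : Fin N) :
    Filter.Tendsto
      (fun T : ℝ => (1 / T) * ∫ t in (0:ℝ)..T,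
        ‖(NormedSpace.exp ((-(Complex.I * (t : ℂ))) • H)) i j‖ ^ 2)
      Filter.atTop
      (nhds (∑ k, ‖P k i j‖ ^ 2)) :=
  long_time_average_transition_probability_general N H K lam hdistinct P hIdem hOrth hSum hSpec i j
end

section
/- Let n ≥ 3 and 1 ≤ k ≤ n−2. Define d ∈ ℝ^{2n} by d_i = 1/√(k(k+1)) for 1 ≤ i ≤ k, d_{k+1} = −k/√(k(k+1)), and d_i = 0 for i > k+1. Then d is a unit vector and M̃ d = −(1/(n−1)) d, where M̃ is the normalized adjacency matrix of the barbell graph B(n). -/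
/-- Adjacency matrix of the barbell graph `B(n)`: vertices `0,…,n-1` form a complete
graph (clique `A`), vertices `n,…,2n-1` form a complete graph (clique `B`), and there is
a single bridge edge joining vertex `n-1` to vertex `n`. -/
def barbellAdj (n : ℕ) : Matrix (Fin (2 * n)) (Fin (2 * n)) ℝ := fun i j =>
  if i = j then 0
  else if (i.val < n ∧ j.val < n) ∨ (n ≤ i.val ∧ n ≤ j.val) then 1
  else if (i.val = n - 1 ∧ j.val = n) ∨ (i.val = n ∧ j.val = n - 1) then 1
  else 0

/-- Degrees of the barbell graph: the two bridge vertices have degree `n`, all other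
vertices have degree `n - 1`. -/
def barbellDeg (n : ℕ) (i : Fin (2 * n)) : ℝ :=
  if i.val = n - 1 ∨ i.val = n then (n : ℝ) else (n : ℝ) - 1

/-- Normalized adjacency matrix `M̃ = Γ^{-1/2} M Γ^{-1/2}` of the barbell graph,
with entries `M_{ij} / √(d_i d_j)`. -/
noncomputable def barbellNormAdj (n : ℕ) : Matrix (Fin (2 * n)) (Fin (2 * n)) ℝ := fun i j =>
  barbellAdj n i j / (Real.sqrt (barbellDeg n i) * Real.sqrt (barbellDeg n j))

/-!
The vector is supported on `k + 1` vertices of clique `A` avoiding the bridge vertex, so these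
vertices are pairwise adjacent, have the same degree `n - 1`, and every other vertex is adjacent
to all of them or to none. For a zero-sum vector supported on such a set of twin vertices the
adjacency matrix acts as `-1`: a vertex of the set sees the sum minus its own entry, any other
vertex sees a multiple of the sum. Normalizing by the constant degree `n - 1` on the support turns
the eigenvalue `-1` into `-1/(n-1)`.
-/

open Finset Matrix

section TwinClique

variable {ι : Type*} [Fintype ι] [DecidableEq ι]

theorem Matrix.mulVec_eq_neg_of_twin_clique (A : Matrix ι ι ℝ) (S : Set ι) (x : ι → ℝ)
    (hsupp : ∀ i ∉ S, x i = 0) (hsum : ∑ i, x i = 0)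
    (hclique : ∀ i ∈ S, ∀ j ∈ S, A i j = if i = j then 0 else 1)
    (htwin : ∀ i ∉ S, ∃ c, ∀ j ∈ S, A i j = c) :
    A *ᵥ x = -x := by
  funext i
  simp only [Matrix.mulVec, dotProduct, Pi.neg_apply]
  by_cases hi : i ∈ S
  · have hterm : ∀ j, A i j * x j = x j - if i = j then x j else 0 := by
      intro j
      by_cases hj : j ∈ S
      · rw [hclique i hi j hj]
        split_ifs <;> ring
      · rw [hsupp j hj]
        split_ifs <;> ring
    simp only [hterm, sum_sub_distrib, sum_ite_eq, mem_univ, if_true, hsum, zero_sub]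
  · obtain ⟨c, hc⟩ := htwin i hi
    have hterm : ∀ j, A i j * x j = c * x j := by
      intro j
      by_cases hj : j ∈ S
      · rw [hc j hj]
      · rw [hsupp j hj, mul_zero, mul_zero]
    rw [sum_congr rfl fun j _ => hterm j, ← mul_sum, hsum, hsupp i hi, mul_zero, neg_zero]

omit [DecidableEq ι] in
/-- No condition on `s` off the support of `x` is needed: there both sides vanish, also where
`s i = 0` and the division is junk. -/
theorem Matrix.mulVec_rescale_eq_smul (A : Matrix ι ι ℝ) (s : ι → ℝ) (σ μ : ℝ) (x : ι → ℝ)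
    (hs : ∀ i, x i ≠ 0 → s i = σ) (hA : A *ᵥ x = μ • x) :
    (Matrix.of fun i j => A i j / (s i * s j)) *ᵥ x = (μ / σ ^ 2) • x := by
  funext i
  have hterm : ∀ j, A i j / (s i * s j) * x j = A i j * x j / (s i * σ) := by
    intro j
    by_cases hj : x j = 0
    · simp [hj]
    · rw [hs j hj]
      ring
  have hrow : ∑ j, A i j * x j = μ * x i := congrFun hA i
  simp only [Matrix.mulVec, dotProduct, Matrix.of_apply, Pi.smul_apply, smul_eq_mul]
  rw [sum_congr rfl fun j _ => hterm j, ← sum_div, hrow]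
  by_cases hi : x i = 0
  · simp [hi]
  · rw [hs i hi]
    ring

end TwinClique

theorem Finset.sum_range_eq_of_forall_lt_eq_zero {M : Type*} [AddCommMonoid M] {g : ℕ → M}
    {k N : ℕ} (hg : ∀ m, k < m → g m = 0) (hN : k < N) :
    ∑ m ∈ range N, g m = ∑ m ∈ range (k + 1), g m := by
  rw [← sum_range_add_sum_Ico g hN, sum_eq_zero fun m hm => hg m (mem_Ico.mp hm).1, add_zero]

/-- Row `k` of the Helmert matrix. -/
noncomputable def helmertVec (k m : ℕ) : ℝ :=
  if m < k then 1 / Real.sqrt ((k : ℝ) * ((k : ℝ) + 1))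
  else if m = k then -(k : ℝ) / Real.sqrt ((k : ℝ) * ((k : ℝ) + 1))
  else 0

theorem helmertVec_of_lt {k m : ℕ} (h : k < m) : helmertVec k m = 0 := by
  simp [helmertVec, h.ne', h.not_gt]

theorem sum_range_helmertVec {k N : ℕ} (hN : k < N) : ∑ m ∈ range N, helmertVec k m = 0 := by
  rw [sum_range_eq_of_forall_lt_eq_zero (fun m => helmertVec_of_lt) hN, sum_range_succ,
    sum_congr rfl fun m hm => by rw [helmertVec, if_pos (mem_range.mp hm)]]
  simp only [helmertVec, lt_irrefl, if_false, if_true, sum_const, card_range, nsmul_eq_mul]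
  ring

theorem sum_range_helmertVec_sq {k N : ℕ} (hk : 1 ≤ k) (hN : k < N) :
    ∑ m ∈ range N, helmertVec k m ^ 2 = 1 := by
  have hpos : (0 : ℝ) < k * (k + 1) := by positivity
  rw [sum_range_eq_of_forall_lt_eq_zero (fun m hm => by rw [helmertVec_of_lt hm, sq, mul_zero]) hN,
    sum_range_succ, sum_congr rfl fun m hm => by rw [helmertVec, if_pos (mem_range.mp hm)]]
  simp only [helmertVec, lt_irrefl, if_false, if_true, sum_const, card_range, nsmul_eq_mul,
    div_pow, neg_sq, Real.sq_sqrt hpos.le]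
  field_simp
  ring

section Barbell

variable {n k : ℕ}

theorem barbellAdj_mulVec_eq_neg (hkn : k + 1 < n) (x : Fin (2 * n) → ℝ)
    (hsupp : ∀ i : Fin (2 * n), k < i.val → x i = 0) (hsum : ∑ i, x i = 0) :
    barbellAdj n *ᵥ x = -x := by
  refine (barbellAdj n).mulVec_eq_neg_of_twin_clique {i | i.val ≤ k} x
    (fun i hi => hsupp i (not_le.mp hi)) hsum ?_ ?_
  · intro i (hi : i.val ≤ k) j (hj : j.val ≤ k)
    simp only [barbellAdj, Fin.ext_iff]
    split_ifs <;> first | rfl | omega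
  · intro i (hi : ¬i.val ≤ k)
    refine ⟨if i.val < n then 1 else 0, fun j (hj : j.val ≤ k) => ?_⟩
    simp only [barbellAdj, Fin.ext_iff]
    split_ifs <;> first | rfl | omega

theorem barbellDeg_of_lt (hkn : k + 1 < n) {i : Fin (2 * n)} (hi : i.val ≤ k) :
    barbellDeg n i = n - 1 :=
  if_neg (by omega)

theorem barbellNormAdj_mulVec_eq_smul (hkn : k + 1 < n) (x : Fin (2 * n) → ℝ)
    (hsupp : ∀ i : Fin (2 * n), k < i.val → x i = 0) (hsum : ∑ i, x i = 0) :
    barbellNormAdj n *ᵥ x = (-(1 / ((n : ℝ) - 1))) • x := by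
  have hn : (1 : ℝ) ≤ n := by exact_mod_cast (by omega : 1 ≤ n)
  have hσ : Real.sqrt ((n : ℝ) - 1) ^ 2 = n - 1 := Real.sq_sqrt (by linarith)
  have hdeg : ∀ i, x i ≠ 0 → Real.sqrt (barbellDeg n i) = Real.sqrt ((n : ℝ) - 1) := by
    intro i hi
    rw [barbellDeg_of_lt hkn (not_lt.mp fun h => hi (hsupp i h))]
  have := (barbellAdj n).mulVec_rescale_eq_smul _ _ (-1) x hdeg
    (by rw [barbellAdj_mulVec_eq_neg hkn x hsupp hsum, neg_one_smul])
  rwa [hσ, neg_div] at this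

end Barbell

theorem barbell_clique_localized_eigenvector_general
    (n k : ℕ) (hk1 : 1 ≤ k) (hk2 : k ≤ n - 2)
    (d : Fin (2 * n) → ℝ)
    (hd : ∀ i : Fin (2 * n),
      d i = if i.val < k then 1 / Real.sqrt ((k : ℝ) * ((k : ℝ) + 1))
            else if i.val = k then -(k : ℝ) / Real.sqrt ((k : ℝ) * ((k : ℝ) + 1))
            else 0) :
    (∑ i, d i ^ 2 = 1) ∧
    (barbellNormAdj n).mulVec d = (-(1 / ((n : ℝ) - 1))) • d := by
  have hkn : k + 1 < n := by omega
  obtain rfl : d = fun i => helmertVec k i.val := funext hd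
  have hN : k < 2 * n := by omega
  refine ⟨?_, barbellNormAdj_mulVec_eq_smul hkn _ (fun i hi => helmertVec_of_lt hi) ?_⟩
  · rw [Fin.sum_univ_eq_sum_range (fun m => helmertVec k m ^ 2)]
    exact sum_range_helmertVec_sq hk1 hN
  · rw [Fin.sum_univ_eq_sum_range (helmertVec k)]
    exact sum_range_helmertVec hN

/-- **Clique-localized degenerate eigenvectors of the barbell graph.**
For `n ≥ 3` and `1 ≤ k ≤ n-2`, the vector with coordinates `1/√(k(k+1))` on the first
`k` vertices of clique `A`, `-k/√(k(k+1))` on vertex `k+1`, and `0` elsewhere, is a unit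
vector and an eigenvector of the normalized adjacency matrix of `B(n)` with eigenvalue
`-1/(n-1)`. -/
theorem barbell_clique_localized_eigenvector
    (n k : ℕ) (hn : 3 ≤ n) (hk1 : 1 ≤ k) (hk2 : k ≤ n - 2)
    (d : Fin (2 * n) → ℝ)
    (hd : ∀ i : Fin (2 * n),
      d i = if i.val < k then 1 / Real.sqrt ((k : ℝ) * ((k : ℝ) + 1))
            else if i.val = k then -(k : ℝ) / Real.sqrt ((k : ℝ) * ((k : ℝ) + 1))
            else 0) :
    (∑ i, d i ^ 2 = 1) ∧
    (barbellNormAdj n).mulVec d = (-(1 / ((n : ℝ) - 1))) • d :=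
  barbell_clique_localized_eigenvector_general n k hk1 hk2 d hd
end

section
/- Let n ≥ 2, let λ ∈ ℝ, and set a = (λ(n−1) − (n−2))·√((n−1)/n). Define y ∈ ℝ^{2n} by y_i = √(n−1) for 1 ≤ i ≤ n−1, y_n = a√n, y_{n+1} = −a√n, and y_i = −√(n−1) for n+2 ≤ i ≤ 2n. Then M y = λ Γ y holds if and only if n(n−1)λ² − (n² − 3n + 1)λ − (2n − 3) = 0, where M and Γ are the adjacency and degree matrices of the barbell graph B(n). -/
open Finset Matrix

lemma sum_range_two_mul_ite_lt_iff (n i : ℕ) (f : ℕ → ℝ) :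
    ∑ k ∈ range (2 * n), (if (k < n ↔ i < n) then f k else 0) =
      if i < n then ∑ k ∈ range n, f k else ∑ k ∈ range n, f (n + k) := by
  rw [two_mul, sum_range_add]
  split_ifs with hi
  · rw [sum_congr rfl fun k hk => if_pos (iff_of_true (mem_range.mp hk) hi),
      sum_congr rfl fun k _ => if_neg (by omega), sum_const_zero, add_zero]
  · rw [sum_congr rfl fun k hk => if_neg (by rw [mem_range] at hk; omega),
      sum_congr rfl fun k _ => if_pos (iff_of_false (by omega) hi), sum_const_zero, zero_add]

lemma barbellAdj_mulVec_apply (n : ℕ) (f : ℕ → ℝ) (i : Fin (2 * n)) :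
    (barbellAdj n *ᵥ fun j => f j) i =
      (if (i : ℕ) < n then ∑ k ∈ range n, f k else ∑ k ∈ range n, f (n + k)) - f i
        + (if (i : ℕ) = n - 1 then f n else if (i : ℕ) = n then f (n - 1) else 0) := by
  have hi := i.isLt
  set g : ℕ → ℝ := fun k => (if (k < n ↔ (i : ℕ) < n) then f k else 0)
    - (if (i : ℕ) = k then f k else 0)
    + (if (i : ℕ) = n - 1 then (if n = k then f k else 0) else
        if (i : ℕ) = n then (if n - 1 = k then f k else 0) else 0) with hg
  have entry : ∀ j : Fin (2 * n), barbellAdj n i j * f j = g j := by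
    intro j
    have hj := j.isLt
    simp only [barbellAdj, Fin.ext_iff, hg]
    split_ifs <;> first | ring1 | (exfalso; omega)
  rw [mulVec, dotProduct, sum_congr rfl fun j _ => entry j, Fin.sum_univ_eq_sum_range g]
  rw [sum_add_distrib, sum_sub_distrib, sum_range_two_mul_ite_lt_iff, sum_ite_eq,
    if_pos (mem_range.mpr hi)]
  congr 1
  split_ifs <;> simp only [sum_ite_eq, sum_const_zero, mem_range] <;> rw [if_pos (by omega)]

def bridgeProfile (n : ℕ) (s t : ℝ) (k : ℕ) : ℝ :=
  if k < n - 1 then s else if k = n - 1 then t else if k = n then -t else -s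

lemma sum_range_bridgeProfile {n : ℕ} (hn : 1 ≤ n) (s t : ℝ) :
    ∑ k ∈ range n, bridgeProfile n s t k = (n - 1) * s + t := by
  obtain ⟨m, rfl⟩ : ∃ m, n = m + 1 := ⟨n - 1, by omega⟩
  have clique : ∀ k ∈ range m, bridgeProfile (m + 1) s t k = s := fun k hk =>
    if_pos (by rw [mem_range] at hk; omega)
  rw [sum_range_succ, sum_congr rfl clique]
  simp [bridgeProfile]

lemma sum_range_bridgeProfile_add {n : ℕ} (hn : 1 ≤ n) (s t : ℝ) :
    ∑ k ∈ range n, bridgeProfile n s t (n + k) = -((n - 1) * s + t) := by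
  obtain ⟨m, rfl⟩ : ∃ m, n = m + 1 := ⟨n - 1, by omega⟩
  have clique : ∀ k ∈ range m, bridgeProfile (m + 1) s t (m + 1 + (k + 1)) = -s := fun k _ => by
    simp only [bridgeProfile]
    rw [if_neg (by omega), if_neg (by omega), if_neg (by omega)]
  rw [sum_range_succ', sum_congr rfl clique]
  simp [bridgeProfile]
  ring

lemma barbellAdj_mulVec_bridgeProfile (n : ℕ) (s t : ℝ) :
    barbellAdj n *ᵥ (fun j => bridgeProfile n s t j) =
      fun i : Fin (2 * n) => bridgeProfile n ((n - 2) * s + t) ((n - 1) * s - t) i := by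
  funext i
  have hi := i.isLt
  have hn : 1 ≤ n := by omega
  rw [barbellAdj_mulVec_apply, sum_range_bridgeProfile hn, sum_range_bridgeProfile_add hn]
  simp only [bridgeProfile]
  split_ifs <;> first | ring1 | (exfalso; omega)

lemma barbellDeg_mul_bridgeProfile (n : ℕ) (s t : ℝ) (i : Fin (2 * n)) :
    barbellDeg n i * bridgeProfile n s t i = bridgeProfile n ((n - 1) * s) (n * t) i := by
  simp only [barbellDeg, bridgeProfile]
  split_ifs <;> first | ring1 | (exfalso; omega)

lemma mul_bridgeProfile (n : ℕ) (c s t : ℝ) (k : ℕ) :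
    c * bridgeProfile n s t k = bridgeProfile n (c * s) (c * t) k := by
  simp only [bridgeProfile]
  split_ifs <;> ring

lemma bridgeProfile_fin_inj {n : ℕ} (hn : 2 ≤ n) {s t s' t' : ℝ} :
    ((fun i : Fin (2 * n) => bridgeProfile n s t i) =
        fun i : Fin (2 * n) => bridgeProfile n s' t' i) ↔ s = s' ∧ t = t' := by
  constructor
  · intro h
    have h0 := congrFun h ⟨0, by omega⟩
    have h1 := congrFun h ⟨n - 1, by omega⟩
    simp only [bridgeProfile, if_pos (show 0 < n - 1 by omega)] at h0
    simp only [bridgeProfile, lt_irrefl, if_false, if_true] at h1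
    exact ⟨h0, h1⟩
  · rintro ⟨rfl, rfl⟩
    rfl

/-- **Antisymmetric bridge modes of the barbell graph.**
For `n ≥ 2`, `λ ∈ ℝ` and `a = (λ(n-1) - (n-2))·√((n-1)/n)`, the vector `y` that equals
`√(n-1)` on the first `n-1` vertices of clique `A`, `a√n` on bridge vertex `n`,
`-a√n` on bridge vertex `n+1`, and `-√(n-1)` on the remaining vertices of clique `B`,
satisfies the generalized eigenvalue equation `M y = λ Γ y` if and only if
`n(n-1)λ² - (n² - 3n + 1)λ - (2n - 3) = 0`. -/
theorem barbell_antisymmetric_mode_iff_quadratic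
    (n : ℕ) (hn : 2 ≤ n) (lam a : ℝ)
    (ha : a = (lam * ((n : ℝ) - 1) - ((n : ℝ) - 2)) * Real.sqrt (((n : ℝ) - 1) / (n : ℝ)))
    (y : Fin (2 * n) → ℝ)
    (hy : ∀ i : Fin (2 * n),
      y i = if i.val < n - 1 then Real.sqrt ((n : ℝ) - 1)
            else if i.val = n - 1 then a * Real.sqrt (n : ℝ)
            else if i.val = n then -(a * Real.sqrt (n : ℝ))
            else -Real.sqrt ((n : ℝ) - 1)) :
    ((barbellAdj n).mulVec y = fun i => lam * (barbellDeg n i * y i))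
      ↔ (n : ℝ) * ((n : ℝ) - 1) * lam ^ 2 - ((n : ℝ) ^ 2 - 3 * (n : ℝ) + 1) * lam
          - (2 * (n : ℝ) - 3) = 0 := by
  have hn1 : (0 : ℝ) < n - 1 := by
    have : (2 : ℝ) ≤ n := by exact_mod_cast hn
    linarith
  set s := Real.sqrt ((n : ℝ) - 1)
  have hs : s ≠ 0 := (Real.sqrt_pos.2 hn1).ne'
  have ht : a * Real.sqrt n = (lam * (n - 1) - (n - 2)) * s := by
    rw [ha, mul_assoc, Real.sqrt_div hn1.le, div_mul_cancel₀ _ (by positivity)]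
  obtain rfl : y = fun i : Fin (2 * n) => bridgeProfile n s (a * Real.sqrt n) i := funext hy
  simp only [barbellAdj_mulVec_bridgeProfile, barbellDeg_mul_bridgeProfile]
  simp only [mul_bridgeProfile]
  rw [bridgeProfile_fin_inj hn, ht]
  constructor
  · rintro ⟨-, h⟩
    refine (mul_eq_zero.1 ?_).resolve_left hs
    linear_combination -h
  · intro hQ
    exact ⟨by ring, by linear_combination (-s) * hQ⟩
end
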